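/- Under the Setup with weak-correlation constant c, assume h₁(D) > 0 and h₂(D) < ∞. For the off-diagonal entries A_{ij} = (1/(D·h₁(D)))·Σ_{d=1}^D X^i_d·X^j_d·h_{dd} (i ≠ j) of the matrix A = (1/(D·h₁(D)))·X^D H^D (X^D)ᵀ, one has E[A_{ij}] = 0 and Var(A_{ij}) ≤ (c/D)·(1 + h₂(D)/h₁(D)²). -/

import Mathlib

open MeasureTheory ProbabilityTheory Filter Matrix

noncomputable section

variable {Ω : Type*} [MeasurableSpace Ω]

/-- The `i`-th entry of the label difference vector `y_D − y⁰_D`, where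
`(y_D)ᵢ = (1/√D) Σ_{d<D} Xⁱ_d W*_d` and `(y⁰_D)ᵢ = (1/√D) Σ_{d<D} Xⁱ_d W⁰_d`. -/
def ydiff (X : ℕ → ℕ → Ω → ℝ) (Wstar W0 : ℕ → Ω → ℝ) (D i : ℕ) (ω : Ω) : ℝ :=
  (Real.sqrt D)⁻¹ * ∑ d ∈ Finset.range D, X i d ω * (Wstar d ω - W0 d ω)

/-- The `N × D` random input matrix `X^D` whose `i`-th row is the sample `Xⁱ`. -/
def inputMatrix (X : ℕ → ℕ → Ω → ℝ) (N D : ℕ) (ω : Ω) : Matrix (Fin N) (Fin D) ℝ :=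
  Matrix.of fun i d => X i.val d.val ω

/-- The diagonal matrix `H^D` with entries `h_dd = g(W⁰_d / √D)`. -/
def hessMatrix (g : ℝ → ℝ) (W0 : ℕ → Ω → ℝ) (D : ℕ) (ω : Ω) : Matrix (Fin D) (Fin D) ℝ :=
  Matrix.diagonal fun d : Fin D => g (W0 d.val ω / Real.sqrt D)

/-- `h₁(D) = E[g(W⁰_d / √D)]`. -/
def hMean (μ : Measure Ω) (g : ℝ → ℝ) (W0 : ℕ → Ω → ℝ) (D : ℕ) : ℝ :=
  ∫ ω, g (W0 0 ω / Real.sqrt D) ∂μ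

/-- `h₂(D) = Var(g(W⁰_d / √D))`. -/
def hVar (μ : Measure Ω) (g : ℝ → ℝ) (W0 : ℕ → Ω → ℝ) (D : ℕ) : ℝ :=
  variance (fun ω => g (W0 0 ω / Real.sqrt D)) μ

/-- Product of two L² functions is integrable. -/
lemma integrable_mul_of_memL2 {μ : Measure Ω} {f g : Ω → ℝ}
    (hf : MemLp f 2 μ) (hg : MemLp g 2 μ) :
    Integrable (fun ω => f ω * g ω) μ := by
  rw [← memLp_one_iff_integrable]
  have h := hf.smul (φ := g) hg (r := 1)
    (hpqr := ⟨by rw [ENNReal.inv_two_add_inv_two, inv_one]⟩)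
  have he : (g • f) = fun ω => f ω * g ω := by
    funext ω; simp [mul_comm]
  rwa [he] at h

/-- Product of two L⁴ functions is in L². -/
lemma memL2_mul_of_memL4 {μ : Measure Ω} {f g : Ω → ℝ}
    (hf : MemLp f 4 μ) (hg : MemLp g 4 μ) :
    MemLp (fun ω => f ω * g ω) 2 μ := by
  have h := hf.smul (φ := g) hg (r := 2)
    (hpqr := ⟨by
      rw [← two_mul, show (4:ENNReal) = 2*2 by norm_num, ENNReal.mul_inv (by simp) (by simp),
        ← mul_assoc, ENNReal.mul_inv_cancel (by simp) (by simp), one_mul]⟩)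
  have he : (g • f) = fun ω => f ω * g ω := by
    funext ω; simp [mul_comm]
  rwa [he] at h

/-- Expectation of a product of independent triples factorizes. -/
lemma triple_integral {μ : Measure Ω} (U V H : Ω → ℝ)
    (hUV : IndepFun U V μ) (hUVH : IndepFun (fun ω => U ω * V ω) H μ)
    (hU : Integrable U μ) (hV : Integrable V μ) (hH : Integrable H μ) :
    Integrable (fun ω => U ω * V ω * H ω) μ ∧
      ∫ ω, U ω * V ω * H ω ∂μ = (∫ ω, U ω ∂μ) * (∫ ω, V ω ∂μ) * (∫ ω, H ω ∂μ) := by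
  have h1 : Integrable (fun ω => U ω * V ω) μ := by
    have := hUV.integrable_mul hU hV
    exact this
  constructor
  · have := hUVH.integrable_mul h1 hH
    exact this
  · have h2 : ∫ ω, U ω * V ω * H ω ∂μ =
        (∫ ω, U ω * V ω ∂μ) * ∫ ω, H ω ∂μ := by
      have := hUVH.integral_fun_mul_eq_mul_integral h1.aestronglyMeasurable hH.aestronglyMeasurable
      exact this
    have h3 : ∫ ω, U ω * V ω ∂μ = (∫ ω, U ω ∂μ) * ∫ ω, V ω ∂μ := by
      have := hUV.integral_fun_mul_eq_mul_integral hU.aestronglyMeasurable hV.aestronglyMeasurable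
      exact this
    rw [h2, h3]

/-- The off-diagonal entries `A_{ij} = (1/(D h₁(D))) Σ_{d<D} Xⁱ_d Xʲ_d h_dd` (`i ≠ j`) of the
scaled Gram matrix have mean `0` and variance at most `(c/D)(1 + h₂(D)/h₁(D)²)`. -/
theorem scaledGram_offdiagonal_mean_zero_variance_le
    (μ : Measure Ω) [IsProbabilityMeasure μ]
    (X : ℕ → ℕ → Ω → ℝ)
    (hXmeas : ∀ i d, Measurable (X i d))
    (hXindep : iIndepFun (fun i ω d => X i d ω) μ)
    (hXident : ∀ i, IdentDistrib (fun ω d => X i d ω) (fun ω d => X 0 d ω) μ μ)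
    (hXmean : ∀ i d, ∫ ω, X i d ω ∂μ = 0)
    (hXvar : ∀ i d, ∫ ω, (X i d ω) ^ 2 ∂μ = 1)
    (hXL4 : ∀ i d, MemLp (X i d) 4 μ)
    (W0 : ℕ → Ω → ℝ) (hW0meas : ∀ d, Measurable (W0 d))
    (hW0indep : iIndepFun W0 μ)
    (hW0ident : ∀ d, IdentDistrib (W0 d) (W0 0) μ μ)
    (hW0X : IndepFun (fun ω d => W0 d ω) (fun ω (q : ℕ × ℕ) => X q.1 q.2 ω) μ)
    (c : ℝ)
    (hsum1 : ∀ d, Summable fun d' => (∫ ω, X 0 d ω * X 0 d' ω ∂μ) ^ 2)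
    (hcorr1 : ∀ d, (∑' d' : ℕ, (∫ ω, X 0 d ω * X 0 d' ω ∂μ) ^ 2) ≤ c)
    (hsum2 : ∀ d, Summable fun d' => |∫ ω, (X 0 d ω) ^ 2 * (X 0 d' ω) ^ 2 ∂μ -
      (∫ ω, (X 0 d ω) ^ 2 ∂μ) * ∫ ω, (X 0 d' ω) ^ 2 ∂μ|)
    (hcorr2 : ∀ d, (∑' d' : ℕ, |∫ ω, (X 0 d ω) ^ 2 * (X 0 d' ω) ^ 2 ∂μ -
      (∫ ω, (X 0 d ω) ^ 2 ∂μ) * ∫ ω, (X 0 d' ω) ^ 2 ∂μ|) ≤ c)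
    (g : ℝ → ℝ) (hg : Measurable g)
    (hgL2 : ∀ D : ℕ, MemLp (fun ω => g (W0 0 ω / Real.sqrt D)) 2 μ)
    (hh1pos : ∀ D : ℕ, 0 < D → 0 < hMean μ g W0 D)
    (i j D : ℕ) (hij : i ≠ j) (hD : 0 < D)
    (Aij : Ω → ℝ)
    (hAij : Aij = fun ω => ((D : ℝ) * hMean μ g W0 D)⁻¹ *
      ∑ d ∈ Finset.range D, X i d ω * X j d ω * g (W0 d ω / Real.sqrt D)) :
    ∫ ω, Aij ω ∂μ = 0 ∧
    variance Aij μ ≤ (c / D) * (1 + hVar μ g W0 D / (hMean μ g W0 D) ^ 2) := by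
  set m1 : ℝ := hMean μ g W0 D with hm1
  set v1 : ℝ := hVar μ g W0 D with hv1
  have hm1pos : 0 < m1 := hh1pos D hD
  -- the h functions
  set hf : ℕ → Ω → ℝ := fun d ω => g (W0 d ω / Real.sqrt D) with hhf
  have hgm : Measurable (fun x : ℝ => g (x / Real.sqrt D)) :=
    hg.comp (measurable_id.div_const _)
  have hfmeas : ∀ d, Measurable (hf d) := fun d => hgm.comp (hW0meas d)
  have hfident : ∀ d, IdentDistrib (hf d) (hf 0) μ μ := fun d => (hW0ident d).comp hgm
  have hfL2 : ∀ d, MemLp (hf d) 2 μ := fun d => (hfident d).symm.memLp_snd (hgL2 D)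
  have hfint : ∀ d, Integrable (hf d) μ := fun d => (hfL2 d).integrable (by norm_num)
  have hfmean : ∀ d, ∫ ω, hf d ω ∂μ = m1 := fun d => (hfident d).integral_eq
  -- second moment of h
  have hfsq : ∫ ω, (hf 0 ω) ^ 2 ∂μ = v1 + m1 ^ 2 := by
    have hvd := variance_eq_sub (hgL2 D)
    have h1 : v1 = (∫ ω, (hf 0 ω) ^ 2 ∂μ) - m1 ^ 2 := hvd
    linarith
  -- mixed h moments
  set Ehh : ℕ → ℕ → ℝ := fun d d' => ∫ ω, hf d ω * hf d' ω ∂μ with hEhh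
  have hEhh_int : ∀ d d', Integrable (fun ω => hf d ω * hf d' ω) μ := fun d d' =>
    integrable_mul_of_memL2 (hfL2 d) (hfL2 d')
  have hEhh_eq : ∀ d d', Ehh d d' = m1 ^ 2 + (if d' = d then v1 else 0) := by
    intro d d'
    rcases eq_or_ne d' d with rfl | hne
    · rw [if_pos rfl]
      have hid : IdentDistrib (fun ω => hf d' ω * hf d' ω) (fun ω => hf 0 ω * hf 0 ω) μ μ :=
        (hfident d').comp (measurable_id.mul measurable_id)
      have ha : Ehh d' d' = ∫ ω, hf 0 ω * hf 0 ω ∂μ := hid.integral_eq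
      have hb : ∫ ω, hf 0 ω * hf 0 ω ∂μ = ∫ ω, (hf 0 ω) ^ 2 ∂μ := by
        congr 1; funext ω; ring
      rw [ha, hb, hfsq]; ring
    · rw [if_neg hne, add_zero]
      have hind : IndepFun (hf d) (hf d') μ :=
        (hW0indep.indepFun (fun h => hne h.symm)).comp hgm hgm
      have h2 : Ehh d d' = (∫ ω, hf d ω ∂μ) * ∫ ω, hf d' ω ∂μ :=
        hind.integral_fun_mul_eq_mul_integral (hfmeas d).aestronglyMeasurable
          (hfmeas d').aestronglyMeasurable
      rw [h2, hfmean, hfmean]; ring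
  -- X moments
  set ρ : ℕ → ℕ → ℝ := fun d d' => ∫ ω, X 0 d ω * X 0 d' ω ∂μ with hρ
  have hXev : ∀ (k d d' : ℕ), ∫ ω, X k d ω * X k d' ω ∂μ = ρ d d' := by
    intro k d d'
    exact ((hXident k).comp ((measurable_pi_apply d).mul (measurable_pi_apply d'))).integral_eq
  have hρdiag : ∀ d, ρ d d = 1 := by
    intro d
    have h : ρ d d = ∫ ω, (X 0 d ω) ^ 2 ∂μ := by
      show (∫ ω, X 0 d ω * X 0 d ω ∂μ) = _
      congr 1; funext ω; ring
    rw [h, hXvar]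
  -- L² membership for X-pair products
  have hXL2 : ∀ k d, MemLp (X k d) 2 μ := fun k d =>
    (hXL4 k d).mono_exponent (by norm_num)
  have hXint : ∀ k d, Integrable (X k d) μ := fun k d =>
    (hXL2 k d).integrable (by norm_num)
  have hXXL2 : ∀ k d d', MemLp (fun ω => X k d ω * X k d' ω) 2 μ := fun k d d' =>
    memL2_mul_of_memL4 (hXL4 k d) (hXL4 k d')
  have hXXint : ∀ k d d', Integrable (fun ω => X k d ω * X k d' ω) μ := fun k d d' =>
    integrable_mul_of_memL2 (hXL2 k d) (hXL2 k d')
  -- independence of rows i and j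
  have rowIndep : IndepFun (fun ω d => X i d ω) (fun ω d => X j d ω) μ :=
    hXindep.indepFun hij
  -- independence of X-part and W-part
  have XWIndep : IndepFun (fun ω (q : ℕ × ℕ) => X q.1 q.2 ω) (fun ω d => W0 d ω) μ :=
    hW0X.symm
  -- the summands
  set T : ℕ → Ω → ℝ := fun d ω => X i d ω * X j d ω * hf d ω with hT
  have hTmeas : ∀ d, Measurable (T d) := fun d =>
    ((hXmeas i d).mul (hXmeas j d)).mul (hfmeas d)
  -- mean of each summand
  have hTkey : ∀ d, Integrable (T d) μ ∧ ∫ ω, T d ω ∂μ = 0 := by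
    intro d
    have hUV : IndepFun (fun ω => X i d ω) (fun ω => X j d ω) μ :=
      rowIndep.comp (measurable_pi_apply d) (measurable_pi_apply d)
    have hUVH : IndepFun (fun ω => X i d ω * X j d ω) (hf d) μ := by
      have := XWIndep.comp
        (φ := fun v : ℕ × ℕ → ℝ => v (i, d) * v (j, d))
        (ψ := fun w : ℕ → ℝ => g (w d / Real.sqrt D))
        (by fun_prop)
        (hgm.comp (measurable_pi_apply d))
      exact this
    have key := triple_integral (fun ω => X i d ω) (fun ω => X j d ω) (hf d)
      hUV hUVH (hXint i d) (hXint j d) (hfint d)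
    refine ⟨key.1, ?_⟩
    have h0 : ∫ ω, T d ω ∂μ =
        (∫ ω, X i d ω ∂μ) * (∫ ω, X j d ω ∂μ) * ∫ ω, hf d ω ∂μ := key.2
    rw [h0, hXmean, hXmean]
    ring
  -- second moments of summands
  have hTTkey : ∀ d d', Integrable (fun ω => T d ω * T d' ω) μ ∧
      ∫ ω, T d ω * T d' ω ∂μ = ρ d d' ^ 2 * Ehh d d' := by
    intro d d'
    have hUV : IndepFun (fun ω => X i d ω * X i d' ω) (fun ω => X j d ω * X j d' ω) μ :=
      rowIndep.comp
        ((measurable_pi_apply d).mul (measurable_pi_apply d'))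
        ((measurable_pi_apply d).mul (measurable_pi_apply d'))
    have hUVH : IndepFun
        (fun ω => (X i d ω * X i d' ω) * (X j d ω * X j d' ω))
        (fun ω => hf d ω * hf d' ω) μ := by
      have := XWIndep.comp
        (φ := fun v : ℕ × ℕ → ℝ => (v (i, d) * v (i, d')) * (v (j, d) * v (j, d')))
        (ψ := fun w : ℕ → ℝ => g (w d / Real.sqrt D) * g (w d' / Real.sqrt D))
        (by fun_prop)
        ((hgm.comp (measurable_pi_apply d)).mul (hgm.comp (measurable_pi_apply d')))
      exact this
    have key := triple_integral
      (fun ω => X i d ω * X i d' ω) (fun ω => X j d ω * X j d' ω)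
      (fun ω => hf d ω * hf d' ω)
      hUV hUVH ((hXXL2 i d d').integrable (by norm_num))
      ((hXXL2 j d d').integrable (by norm_num)) (hEhh_int d d')
    have heq : (fun ω => T d ω * T d' ω) =
        (fun ω => (X i d ω * X i d' ω) * (X j d ω * X j d' ω) * (hf d ω * hf d' ω)) := by
      funext ω
      show X i d ω * X j d ω * hf d ω * (X i d' ω * X j d' ω * hf d' ω) = _
      ring
    constructor
    · rw [heq]; exact key.1
    · have hE : (∫ ω, hf d ω * hf d' ω ∂μ) = Ehh d d' := rfl
      rw [heq, key.2, hXev, hXev, hE]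
      ring
  -- the sum S
  set S : Ω → ℝ := fun ω => ∑ d ∈ Finset.range D, T d ω with hS
  have hSint : Integrable S μ := integrable_finset_sum _ (fun d _ => (hTkey d).1)
  have hSmean : ∫ ω, S ω ∂μ = 0 := by
    have h : ∫ ω, S ω ∂μ = ∑ d ∈ Finset.range D, ∫ ω, T d ω ∂μ :=
      integral_finset_sum _ (fun d _ => (hTkey d).1)
    rw [h]
    exact Finset.sum_eq_zero fun d _ => (hTkey d).2
  have hSL2 : MemLp S 2 μ := by
    apply memLp_finset_sum (Finset.range D) (f := T)
    intro d _
    rw [memLp_two_iff_integrable_sq (hTmeas d).aestronglyMeasurable]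
    have := (hTTkey d d).1
    have heq : (fun x => T d x ^ 2) = fun ω => T d ω * T d ω := by
      funext ω; ring
    rw [heq]; exact this
  -- variance of S
  have hSsq : ∫ ω, S ω ^ 2 ∂μ =
      ∑ d ∈ Finset.range D, ∑ d' ∈ Finset.range D, ρ d d' ^ 2 * Ehh d d' := by
    have h1 : (fun ω => S ω ^ 2) =
        fun ω => ∑ d ∈ Finset.range D, ∑ d' ∈ Finset.range D, T d ω * T d' ω := by
      funext ω
      show (∑ d ∈ Finset.range D, T d ω) ^ 2 = _
      rw [sq, Finset.sum_mul_sum]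
    rw [show (∫ ω, S ω ^ 2 ∂μ) = ∫ ω, (fun ω => S ω ^ 2) ω ∂μ from rfl, h1,
      integral_finset_sum _ (fun d _ =>
        integrable_finset_sum _ (fun d' _ => (hTTkey d d').1))]
    refine Finset.sum_congr rfl fun d _ => ?_
    rw [integral_finset_sum _ (fun d' _ => (hTTkey d d').1)]
    exact Finset.sum_congr rfl fun d' _ => (hTTkey d d').2
  have hvarS : variance S μ = ∑ d ∈ Finset.range D, ∑ d' ∈ Finset.range D,
      ρ d d' ^ 2 * Ehh d d' := by
    rw [variance_eq_sub hSL2]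
    have h2 : μ[S ^ 2] = ∫ ω, S ω ^ 2 ∂μ := by rfl
    have h3 : μ[S] = ∫ ω, S ω ∂μ := rfl
    rw [h2, h3, hSmean, hSsq]
    ring
  -- key bounds
  have hcge1 : 1 ≤ c := by
    have h00 : ρ 0 0 ^ 2 ≤ ∑' d' : ℕ, (∫ ω, X 0 0 ω * X 0 d' ω ∂μ) ^ 2 :=
      Summable.le_tsum (hsum1 0) 0 (fun _ _ => sq_nonneg _)
    rw [hρdiag 0] at h00
    simpa using h00.trans (hcorr1 0)
  have hv1nonneg : 0 ≤ v1 := variance_nonneg _ _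
  have hrowsum : ∀ d, ∑ d' ∈ Finset.range D, ρ d d' ^ 2 ≤ c := by
    intro d
    exact (Summable.sum_le_tsum (Finset.range D) (fun _ _ => sq_nonneg _) (hsum1 d)).trans (hcorr1 d)
  -- bound the double sum
  have hbound : ∑ d ∈ Finset.range D, ∑ d' ∈ Finset.range D, ρ d d' ^ 2 * Ehh d d' ≤
      (D : ℝ) * (c * m1 ^ 2 + c * v1) := by
    have hrow : ∀ d ∈ Finset.range D,
        ∑ d' ∈ Finset.range D, ρ d d' ^ 2 * Ehh d d' ≤ c * m1 ^ 2 + c * v1 := by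
      intro d hd
      have hsplit : ∑ d' ∈ Finset.range D, ρ d d' ^ 2 * Ehh d d' =
          m1 ^ 2 * (∑ d' ∈ Finset.range D, ρ d d' ^ 2) + v1 := by
        have : ∀ d' ∈ Finset.range D, ρ d d' ^ 2 * Ehh d d' =
            m1 ^ 2 * ρ d d' ^ 2 + (if d' = d then ρ d d' ^ 2 * v1 else 0) := by
          intro d' _
          rw [hEhh_eq d d']
          rcases eq_or_ne d' d with rfl | hne
          · rw [if_pos rfl, if_pos rfl]; ring
          · rw [if_neg hne, if_neg hne]; ring
        rw [Finset.sum_congr rfl this, Finset.sum_add_distrib, ← Finset.mul_sum,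
          Finset.sum_ite_eq' (Finset.range D) d (fun d' => ρ d d' ^ 2 * v1)]
        simp [hd, hρdiag d]
      rw [hsplit]
      have h1 : m1 ^ 2 * (∑ d' ∈ Finset.range D, ρ d d' ^ 2) ≤ m1 ^ 2 * c :=
        mul_le_mul_of_nonneg_left (hrowsum d) (sq_nonneg _)
      have h2 : v1 ≤ c * v1 := by nlinarith
      nlinarith
    calc ∑ d ∈ Finset.range D, ∑ d' ∈ Finset.range D, ρ d d' ^ 2 * Ehh d d'
        ≤ ∑ d ∈ Finset.range D, (c * m1 ^ 2 + c * v1) := Finset.sum_le_sum hrow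
      _ = (D : ℝ) * (c * m1 ^ 2 + c * v1) := by
          rw [Finset.sum_const, Finset.card_range, nsmul_eq_mul]
  -- conclude
  have hAijS : Aij = fun ω => ((D : ℝ) * m1)⁻¹ * S ω := by
    rw [hAij, hS]
  constructor
  · rw [hAijS, integral_const_mul, hSmean, mul_zero]
  · have hvarA : variance Aij μ = (((D : ℝ) * m1)⁻¹) ^ 2 * variance S μ := by
      rw [hAijS]; exact variance_const_mul _ _ _
    rw [hvarA, hvarS]
    have hDpos : (0 : ℝ) < D := by exact_mod_cast hD
    have hfac : (0 : ℝ) ≤ (((D : ℝ) * m1)⁻¹) ^ 2 := sq_nonneg _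
    calc (((D : ℝ) * m1)⁻¹) ^ 2 * ∑ d ∈ Finset.range D, ∑ d' ∈ Finset.range D,
          ρ d d' ^ 2 * Ehh d d'
        ≤ (((D : ℝ) * m1)⁻¹) ^ 2 * ((D : ℝ) * (c * m1 ^ 2 + c * v1)) :=
          mul_le_mul_of_nonneg_left hbound hfac
      _ = (c / D) * (1 + v1 / m1 ^ 2) := by
          field_simp
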